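/- Let G = (V, E, w, μ) be a submodular hypergraph, p ≥ 1, and k ∈ {1, …, N}. Then the k-th variational eigenvalue of △_p satisfies λ_k^{(p)} ≤ (min{ζ(E), k})^{p−1} · h_k, where ζ(E) = max_{e∈E} |e|. If moreover G is homogeneous, i.e., w_e(S) = 1 for all e ∈ E and all S ∈ 2^e ∖ {∅, e}, then the tighter bound λ_k^{(p)} ≤ 2^{p−1} · h_k holds. -/

import Mathlib

open scoped BigOperators
open Finset

noncomputable section

/-- A set function on the ground set `Fin N` is submodular:
`F(S ∪ T) + F(S ∩ T) ≤ F(S) + F(T)` for all `S, T`. -/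
def Submodular {N : ℕ} (F : Finset (Fin N) → ℝ) : Prop :=
  ∀ S T : Finset (Fin N), F (S ∪ T) + F (S ∩ T) ≤ F S + F T

/-- The Lovász extension of a set function, written in its (tie-breaking independent)
level-set integral form, which agrees with the usual sorted-sum definition
`f(x) = Σ_{j=1}^{N-1} F({i_1,…,i_j})(x_{i_j} − x_{i_{j+1}})` for a nonincreasing
ordering `x_{i_1} ≥ … ≥ x_{i_N}`. -/
def lovasz {N : ℕ} (F : Finset (Fin N) → ℝ) (x : Fin N → ℝ) : ℝ :=
  ∫ t in (⨅ v, x v)..(⨆ v, x v), F (Finset.univ.filter fun v => t < x v)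

/-- The inner product `⟨y, x⟩ = Σ_v y_v x_v`. -/
def dotp {N : ℕ} (y x : Fin N → ℝ) : ℝ := ∑ v, y v * x v

/-- The set of subgradients of `f : ℝ^N → ℝ` at `x`. -/
def subgradients {N : ℕ} (f : (Fin N → ℝ) → ℝ) (x : Fin N → ℝ) : Set (Fin N → ℝ) :=
  {y | ∀ x', dotp y (x' - x) ≤ f x' - f x}

/-- The base polytope of a set function: `y(S) ≤ F(S)` for all `S ⊆ V` and `y(V) = 0`. -/
def basePolytope {N : ℕ} (F : Finset (Fin N) → ℝ) : Set (Fin N → ℝ) :=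
  {y | (∀ S : Finset (Fin N), ∑ v ∈ S, y v ≤ F S) ∧ ∑ v, y v = 0}

/-- The sign function (`sgn 0 = 0`). -/
def sgn (a : ℝ) : ℝ := if 0 < a then 1 else if a < 0 then -1 else 0

/-- A vector is nonconstant. -/
def Nonconstant {N : ℕ} (x : Fin N → ℝ) : Prop := ∃ u v, x u ≠ x v

/-- Restriction of a vector to a subset of vertices (zero outside that subset). -/
def restrictVec {N : ℕ} (x : Fin N → ℝ) (C : Finset (Fin N)) : Fin N → ℝ :=
  fun v => if v ∈ C then x v else 0

/-- Euclidean norm on `ℝ^N`. -/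
def l2norm {N : ℕ} (z : Fin N → ℝ) : ℝ := Real.sqrt (∑ v, z v ^ 2)

/-- Supremum norm on `ℝ^N`. -/
def linfNorm {N : ℕ} (z : Fin N → ℝ) : ℝ := ⨆ v, |z v|

/-- A submodular hypergraph `G = (V, E, w, μ)` on `V = Fin N`: hyperedges `E`,
positive vertex weights `μ`, and for each hyperedge `e ∈ E` a scalar `θ_e > 0`
together with a normalized symmetric submodular weight `w_e : 2^e → [0,1]`
(extended to all of `2^V` by `w_e(S) = w_e(S ∩ e)`). -/
structure SubmodularHypergraph (N : ℕ) where
  E : Finset (Finset (Fin N))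
  μ : Fin N → ℝ
  μ_pos : ∀ v, 0 < μ v
  θ : Finset (Fin N) → ℝ
  θ_pos : ∀ e ∈ E, 0 < θ e
  w : Finset (Fin N) → Finset (Fin N) → ℝ
  w_inter : ∀ e ∈ E, ∀ S, w e S = w e (S ∩ e)
  w_submodular : ∀ e ∈ E, Submodular (w e)
  w_nonneg : ∀ e ∈ E, ∀ S, 0 ≤ w e S
  w_le_one : ∀ e ∈ E, ∀ S, w e S ≤ 1
  w_empty : ∀ e ∈ E, w e ∅ = 0
  w_normalized : ∀ e ∈ E, ∃ S ⊆ e, w e S = 1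
  w_symm : ∀ e ∈ E, ∀ S ⊆ e, w e S = w e (e \ S)

namespace SubmodularHypergraph

variable {N : ℕ} (G : SubmodularHypergraph N)

/-- `vol(S) = Σ_{v ∈ S} μ_v`. -/
def vol (S : Finset (Fin N)) : ℝ := ∑ v ∈ S, G.μ v

/-- `vol(∂S) = Σ_{e ∈ E} θ_e w_e(S)`. -/
def volB (S : Finset (Fin N)) : ℝ := ∑ e ∈ G.E, G.θ e * G.w e S

/-- The Lovász extension `f_e` of the hyperedge weight `w_e`. -/
def fe (e : Finset (Fin N)) (x : Fin N → ℝ) : ℝ := lovasz (G.w e) x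

/-- `Q_p(x) = Σ_{e ∈ E} θ_e f_e(x)^p`. -/
def Q (p : ℝ) (x : Fin N → ℝ) : ℝ := ∑ e ∈ G.E, G.θ e * G.fe e x ^ p

/-- `‖x‖_{ℓp,μ}^p = Σ_v μ_v |x_v|^p`. -/
def normLpPow (p : ℝ) (x : Fin N → ℝ) : ℝ := ∑ v, G.μ v * |x v| ^ p

/-- `G` is connected: `vol(∂S) > 0` for all nonempty proper `S ⊂ V`. -/
def Connected : Prop :=
  ∀ S : Finset (Fin N), S.Nonempty → S ≠ Finset.univ → 0 < G.volB S

/-- Vertices `u, v` are connected in `G`: every `S` with `u ∈ S`, `v ∉ S` has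
`vol(∂S) > 0`. -/
def VertConnected (u v : Fin N) : Prop :=
  ∀ S : Finset (Fin N), u ∈ S → v ∉ S → 0 < G.volB S

/-- The conductance `c(S) = vol(∂S) / min{vol(S), vol(V∖S)}`. -/
def conductance (S : Finset (Fin N)) : ℝ := G.volB S / min (G.vol S) (G.vol Sᶜ)

/-- The degree `d_v = Σ_{e ∈ E : v ∈ e} θ_e`. -/
def degree (v : Fin N) : ℝ := ∑ e ∈ G.E.filter (fun e => v ∈ e), G.θ e

/-- `τ = max_v d_v / μ_v`. -/
def tau : ℝ := ⨆ v, G.degree v / G.μ v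

/-- `G` is homogeneous: `w_e(S) = 1` for every `S ∈ 2^e ∖ {∅, e}`. -/
def Homogeneous : Prop :=
  ∀ e ∈ G.E, ∀ S ⊆ e, S ≠ ∅ → S ≠ e → G.w e S = 1

/-- `(λ, x)` is an eigenpair of the `p`-Laplacian `△_p` (for `p > 1` and for `p = 1`). -/
def IsEigenpair (p lam : ℝ) (x : Fin N → ℝ) : Prop :=
  x ≠ 0 ∧
  ∃ y : Finset (Fin N) → Fin N → ℝ,
    (∀ e ∈ G.E, y e ∈ basePolytope (G.w e) ∧
        ∀ z ∈ basePolytope (G.w e), dotp z x ≤ dotp (y e) x) ∧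
    (if 1 < p then
        ∀ v, ∑ e ∈ G.E, G.θ e * G.fe e x ^ (p - 1) * y e v
              = lam * G.μ v * (|x v| ^ (p - 1) * sgn (x v))
      else
        (∀ v, x v ≠ 0 → ∑ e ∈ G.E, G.θ e * y e v = lam * G.μ v * sgn (x v)) ∧
        (∀ v, x v = 0 → |∑ e ∈ G.E, G.θ e * y e v| ≤ lam * G.μ v))

/-- Vertices `u, v` are connected inside the induced sub-hypergraph `G[W]`
(the boundary volume in `G[W]` of `S ⊆ W` equals `Σ_{e ∈ E} θ_e w_e(S)`). -/
def VertConnectedIn (W : Finset (Fin N)) (u v : Fin N) : Prop :=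
  u = v ∨ ∀ S ⊆ W, u ∈ S → v ∉ S → 0 < G.volB S

/-- `C` is (the vertex set of) a connected component of the induced sub-hypergraph `G[W]`. -/
def IsComponent (W C : Finset (Fin N)) : Prop :=
  C ⊆ W ∧ C.Nonempty ∧
    (∀ u ∈ C, ∀ v ∈ C, G.VertConnectedIn W u v) ∧
    (∀ u ∈ C, ∀ v ∈ W, G.VertConnectedIn W u v → v ∈ C)

end SubmodularHypergraph

def posSupp {N : ℕ} (x : Fin N → ℝ) : Finset (Fin N) := Finset.univ.filter fun v => 0 < x v
def negSupp {N : ℕ} (x : Fin N → ℝ) : Finset (Fin N) := Finset.univ.filter fun v => x v < 0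
def nonnegSupp {N : ℕ} (x : Fin N → ℝ) : Finset (Fin N) := Finset.univ.filter fun v => 0 ≤ x v
def nonposSupp {N : ℕ} (x : Fin N → ℝ) : Finset (Fin N) := Finset.univ.filter fun v => x v ≤ 0

namespace SubmodularHypergraph

variable {N : ℕ} (G : SubmodularHypergraph N)

/-- The number of strong nodal domains of `x` (positive ones plus negative ones). -/
def strongNodalCount (x : Fin N → ℝ) : ℕ :=
  {C : Finset (Fin N) | G.IsComponent (posSupp x) C}.ncard +
  {C : Finset (Fin N) | G.IsComponent (negSupp x) C}.ncard

/-- The number of weak nodal domains of `x` (positive ones plus negative ones). -/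
def weakNodalCount (x : Fin N → ℝ) : ℕ :=
  {C : Finset (Fin N) | G.IsComponent (nonnegSupp x) C}.ncard +
  {C : Finset (Fin N) | G.IsComponent (nonposSupp x) C}.ncard

/-- The collection of strong nodal domains of `x`. -/
def strongNodalDomains (x : Fin N → ℝ) : Set (Finset (Fin N)) :=
  {C | G.IsComponent (posSupp x) C ∨ G.IsComponent (negSupp x) C}

/-- The collection of weak nodal domains of `x`. -/
def weakNodalDomains (x : Fin N → ℝ) : Set (Finset (Fin N)) :=
  {C | G.IsComponent (nonnegSupp x) C ∨ G.IsComponent (nonposSupp x) C}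

/-- `Z_{p,μ}(x) = min_c ‖x − c·𝟙‖_{ℓp,μ}^p`. -/
def Z (p : ℝ) (x : Fin N → ℝ) : ℝ := ⨅ c : ℝ, ∑ v, G.μ v * |x v - c| ^ p

/-- `𝓡_p(x) = Q_p(x) / Z_{p,μ}(x)`. -/
def Rq (p : ℝ) (x : Fin N → ℝ) : ℝ := G.Q p x / G.Z p x

/-- The `k`-way Cheeger constant `h_k`. -/
def cheegerConst (k : ℕ) : ℝ :=
  sInf {c : ℝ | ∃ S : Fin k → Finset (Fin N),
    (∀ i, (S i).Nonempty) ∧ (∀ i j, i ≠ j → Disjoint (S i) (S j)) ∧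
    c = ⨆ i, G.conductance (S i)}

end SubmodularHypergraph

/-- There is an odd continuous map `h : A → ℝ^k ∖ {0}`. -/
def genusLE {N : ℕ} (A : Set (Fin N → ℝ)) (k : ℕ) : Prop :=
  ∃ h : (Fin N → ℝ) → (Fin k → ℝ),
    ContinuousOn h A ∧ (∀ x ∈ A, h (-x) = -h x) ∧ ∀ x ∈ A, h x ≠ 0

/-- The Krasnoselski genus of a set. -/
def genus {N : ℕ} (A : Set (Fin N → ℝ)) : ℕ∞ :=
  sInf ((fun n : ℕ => (n : ℕ∞)) '' {n | genusLE A n})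

namespace SubmodularHypergraph

variable {N : ℕ} (G : SubmodularHypergraph N)

/-- The `k`-th variational eigenvalue `λ_k^{(p)}` of `△_p`:
`min` over closed symmetric `A ⊆ S_{p,μ}` with `γ(A) ≥ k` of `max_{x ∈ A} Q_p(x)`. -/
def varEigen (p : ℝ) (k : ℕ) : ℝ :=
  sInf ((fun A : Set (Fin N → ℝ) => sSup (G.Q p '' A)) ''
    {A | IsClosed A ∧ (∀ x ∈ A, -x ∈ A) ∧
         A ⊆ {x | G.normLpPow p x = 1} ∧ (k : ℕ∞) ≤ genus A})

end SubmodularHypergraph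

/-!
Fix pairwise disjoint nonempty `S₁, …, S_k`. The `ℓp,μ`-unit sphere `A` of the span of their
indicator vectors is admissible for `λ_k`: any admissible set contains a subset `Z` of genus
exactly `k`, and an odd map `Z → ℝ^k ∖ {0}` followed by `t ↦ Σ tᵢ 𝟙_{Sᵢ}` and normalisation maps
`Z` oddly into `A`, so `γ(A) ≥ k`. (If there is no admissible set, `λ_k` is the junk value
`sInf ∅ = 0`.)

For `x = Σ tᵢ 𝟙_{Sᵢ}` every superlevel set of `x`, or its complement, is a union of blocks `Sᵢ`,
so subadditivity and symmetry of `w_e` give `f_e(x) ≤ Σ |tᵢ| w_e(Sᵢ)`, a sum with at most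
`min(|e|, k)` nonzero terms; the power-mean inequality turns this into
`f_e(x)^p ≤ min(ζ(E), k)^{p-1} Σ |tᵢ|^p w_e(Sᵢ)`. On a homogeneous edge instead
`f_e(x) ≤ max_e x - min_e x`, and each nonzero extreme value is the value of a block cut with
weight `1`, which gives the constant `2^{p-1}`. Summing over the edges,
`Q_p(x) ≤ C Σ |tᵢ|^p vol(∂Sᵢ) ≤ C maxᵢ c(Sᵢ) ‖x‖^p`, hence `λ_k ≤ C maxᵢ c(Sᵢ)`.
-/

open Function

section Genus

variable {N : ℕ}

lemma le_genus_iff {A : Set (Fin N → ℝ)} {k : ℕ} :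
    (k : ℕ∞) ≤ genus A ↔ ∀ n, genusLE A n → k ≤ n := by
  simp only [genus, le_sInf_iff, Set.forall_mem_image, Set.mem_ofPred_eq, Nat.cast_le]

lemma genusLE_of_odd_map {M : ℕ} {A : Set (Fin N → ℝ)} {B : Set (Fin M → ℝ)}
    {f : (Fin N → ℝ) → Fin M → ℝ} (hf : ContinuousOn f A) (hAB : Set.MapsTo f A B)
    (hodd : ∀ x ∈ A, f (-x) = -f x) {n : ℕ} (hB : genusLE B n) : genusLE A n := by
  obtain ⟨g, hg, hgodd, hg0⟩ := hB
  refine ⟨g ∘ f, hg.comp hf hAB, fun x hx => ?_, fun x hx => hg0 _ (hAB hx)⟩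
  simp only [Function.comp_apply, hodd x hx, hgodd (f x) (hAB hx)]

lemma genus_le_of_odd_map {M : ℕ} {A : Set (Fin N → ℝ)} {B : Set (Fin M → ℝ)}
    {f : (Fin N → ℝ) → Fin M → ℝ} (hf : ContinuousOn f A) (hAB : Set.MapsTo f A B)
    (hodd : ∀ x ∈ A, f (-x) = -f x) : genus A ≤ genus B :=
  le_sInf <| Set.forall_mem_image.2 fun _ hn => sInf_le ⟨_, genusLE_of_odd_map hf hAB hodd hn, rfl⟩

lemma genusLE_of_forall_ne_zero {A : Set (Fin N → ℝ)} (hA : ∀ x ∈ A, x ≠ 0) : genusLE A N :=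
  ⟨id, continuousOn_id, fun _ _ => rfl, hA⟩

/-- Odd part of a Tietze extension. -/
lemma exists_odd_continuous_extension {n : ℕ} {Z : Set (Fin N → ℝ)} (hZ : IsClosed Z)
    (hZsymm : ∀ x ∈ Z, -x ∈ Z) {u : (Fin N → ℝ) → Fin n → ℝ}
    (hu : ContinuousOn u Z) (hodd : ∀ x ∈ Z, u (-x) = -u x) :
    ∃ v : (Fin N → ℝ) → Fin n → ℝ, Continuous v ∧ (∀ x, v (-x) = -v x) ∧ Set.EqOn v u Z := by
  obtain ⟨g, hg⟩ := ContinuousMap.exists_restrict_eq hZ ⟨Z.domRestrict u, hu.domRestrict⟩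
  have hgu : Set.EqOn g u Z := fun x hx => DFunLike.congr_fun hg ⟨x, hx⟩
  refine ⟨fun x => (2 : ℝ)⁻¹ • (g x - g (-x)), by fun_prop, fun x => ?_, fun x hx => ?_⟩
  · simp only [neg_neg, ← smul_neg, neg_sub]
  · simp only [hgu hx, hgu (hZsymm x hx), hodd x hx]
    module

lemma genusLE_add_of_genusLE_inter_zeroSet {j n : ℕ} {A : Set (Fin N → ℝ)} (hA : IsClosed A)
    (hAsymm : ∀ x ∈ A, -x ∈ A) {g : (Fin N → ℝ) → Fin j → ℝ} (hg : ContinuousOn g A)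
    (hgodd : ∀ x ∈ A, g (-x) = -g x) (hZ : genusLE (A ∩ g ⁻¹' {0}) n) :
    genusLE A (n + j) := by
  obtain ⟨u, hu, hodd, hu0⟩ := hZ
  obtain ⟨v, hv, hvodd, hvu⟩ := exists_odd_continuous_extension
    (hg.preimage_isClosed_of_isClosed hA isClosed_singleton)
    (fun x hx => ⟨hAsymm x hx.1, by simp [hgodd x hx.1, show g x = 0 from hx.2]⟩) hu hodd
  refine ⟨fun x => Fin.append (v x) (g x), ?_, fun x hx => ?_, fun x hx h0 => ?_⟩
  · refine continuousOn_pi.2 fun i => Fin.addCases (fun i => ?_) (fun i => ?_) i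
    · simp only [Fin.append_left]
      exact (continuous_apply i).comp_continuousOn hv.continuousOn
    · simp only [Fin.append_right]
      exact (continuous_apply i).comp_continuousOn hg
  · show Fin.append (v (-x)) (g (-x)) = -Fin.append (v x) (g x)
    rw [hvodd, hgodd x hx]
    exact funext <| Fin.addCases (by simp) (by simp)
  · have hv0 : v x = 0 := funext fun i => by simpa using congrFun h0 (Fin.castAdd j i)
    have hg0 : g x = 0 := funext fun i => by simpa using congrFun h0 (Fin.natAdd n i)
    exact hu0 x ⟨hx, hg0⟩ (hvu ⟨hx, hg0⟩ ▸ hv0)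

/-- Split a minimal odd map `A → ℝ^(k+j) ∖ {0}` into its first `k` and last `j` coordinates;
`Z` is the zero set of the last `j`. -/
lemma exists_subset_genusLE_le_genus {A : Set (Fin N → ℝ)} (hA : IsClosed A)
    (hAsymm : ∀ x ∈ A, -x ∈ A) (hA0 : ∀ x ∈ A, x ≠ 0) {k : ℕ} (hk : (k : ℕ∞) ≤ genus A) :
    ∃ Z ⊆ A, genusLE Z k ∧ (k : ℕ∞) ≤ genus Z := by
  classical
  have hfin : ∃ n, genusLE A n := ⟨N, genusLE_of_forall_ne_zero hA0⟩
  obtain ⟨j, hj⟩ := Nat.exists_eq_add_of_le (le_genus_iff.1 hk _ (Nat.find_spec hfin))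
  obtain ⟨h, hh, hodd, hh0⟩ : genusLE A (k + j) := hj ▸ Nat.find_spec hfin
  set g : (Fin N → ℝ) → Fin j → ℝ := fun x i => h x (Fin.natAdd k i)
  have hg : ContinuousOn g A := continuousOn_pi.2 fun i => (continuous_apply _).comp_continuousOn hh
  have hgodd : ∀ x ∈ A, g (-x) = -g x := fun x hx => funext fun i => by simp [g, hodd x hx]
  refine ⟨A ∩ g ⁻¹' {0}, Set.inter_subset_left, ⟨fun x i => h x (Fin.castAdd j i),
    continuousOn_pi.2 fun i =>
      (continuous_apply _).comp_continuousOn (hh.mono Set.inter_subset_left),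
    fun x hx => funext fun i => by simp [hodd x hx.1], fun x hx h0 => hh0 x hx.1 ?_⟩, ?_⟩
  · have hg0 : g x = 0 := hx.2
    exact funext <| Fin.addCases (fun i => congrFun h0 i) (fun i => congrFun hg0 i)
  · refine le_genus_iff.2 fun n hn => ?_
    have := Nat.find_min' hfin (genusLE_add_of_genusLE_inter_zeroSet hA hAsymm hg hgodd hn)
    omega

end Genus

section Lovasz

open MeasureTheory

variable {N : ℕ}

lemma iInf_le_iSup_of_finite {ι : Type*} [Finite ι] (x : ι → ℝ) : ⨅ i, x i ≤ ⨆ i, x i := by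
  rcases isEmpty_or_nonempty ι with h | h
  · simp [Real.iInf_of_isEmpty, Real.iSup_of_isEmpty]
  · exact ciInf_le_ciSup (Set.finite_range x).bddBelow (Set.finite_range x).bddAbove

lemma measurableSet_filter_lt_eq (x : Fin N → ℝ) (S : Finset (Fin N)) :
    MeasurableSet {τ : ℝ | (univ.filter fun v => τ < x v) = S} := by
  have : {τ : ℝ | (univ.filter fun v => τ < x v) = S}
      = ⋂ v, {τ : ℝ | τ < x v ↔ v ∈ S} := by
    ext τ
    simp [Finset.ext_iff]
  rw [this]
  refine MeasurableSet.iInter fun v => ?_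
  by_cases hv : v ∈ S
  · simp only [hv, iff_true]
    exact measurableSet_lt measurable_id measurable_const
  · simp only [hv, iff_false, not_lt]
    exact measurableSet_le measurable_const measurable_id

/-- The level-set function is a finite sum of indicators of measurable sets. -/
lemma intervalIntegrable_filter_lt (F : Finset (Fin N) → ℝ) (x : Fin N → ℝ) (a b : ℝ) :
    IntervalIntegrable (fun τ => F (univ.filter fun v => τ < x v)) volume a b := by
  have : (fun τ => F (univ.filter fun v => τ < x v)) = fun τ => ∑ S : Finset (Fin N),
      {τ' : ℝ | (univ.filter fun v => τ' < x v) = S}.indicator (fun _ => F S) τ := by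
    funext τ
    rw [sum_eq_single_of_mem _ (mem_univ (univ.filter fun v => τ < x v))]
    · exact (Set.indicator_of_mem rfl _).symm
    · exact fun S _ hS => Set.indicator_of_notMem (Ne.symm hS) _
  rw [this, intervalIntegrable_iff]
  exact integrable_finsetSum _ fun S _ =>
    (integrableOn_const measure_Ioc_lt_top.ne enorm_ne_top).indicator
      (measurableSet_filter_lt_eq x S)

lemma integral_indicator_one_Ico_le {a b m M : ℝ} (hab : a ≤ b) (hmM : m ≤ M) :
    ∫ τ in m..M, (Set.Ico a b).indicator 1 τ ≤ b - a := by
  rw [intervalIntegral.integral_of_le hmM, integral_indicator_one measurableSet_Ico]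
  calc (volume.restrict (Set.Ioc m M)).real (Set.Ico a b) ≤ volume.real (Set.Ico a b) := by
        rw [measureReal_restrict_apply measurableSet_Ico]
        exact measureReal_mono Set.inter_subset_left measure_Ico_lt_top.ne
    _ = b - a := by simp [hab]

lemma lovasz_nonneg {F : Finset (Fin N) → ℝ} (hF : ∀ S, 0 ≤ F S) (x : Fin N → ℝ) :
    0 ≤ lovasz F x :=
  intervalIntegral.integral_nonneg (iInf_le_iSup_of_finite x) fun _ _ => hF _

lemma lovasz_le_sum_of_le_indicator {F : Finset (Fin N) → ℝ} {x : Fin N → ℝ} {ι : Type*}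
    [Fintype ι] {c a b : ι → ℝ} (hc : ∀ i, 0 ≤ c i) (hab : ∀ i, a i ≤ b i)
    (h : ∀ τ, F (univ.filter fun v => τ < x v)
      ≤ ∑ i, c i * (Set.Ico (a i) (b i)).indicator 1 τ) :
    lovasz F x ≤ ∑ i, c i * (b i - a i) := by
  have hint : ∀ i, IntervalIntegrable (fun τ => c i * (Set.Ico (a i) (b i)).indicator 1 τ)
      volume (⨅ v, x v) (⨆ v, x v) := fun i =>
    (intervalIntegrable_iff.2 ((integrableOn_const measure_Ioc_lt_top.ne enorm_ne_top).indicator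
      measurableSet_Ico)).const_mul _
  calc lovasz F x ≤ ∫ τ in (⨅ v, x v)..(⨆ v, x v), ∑ i, c i * (Set.Ico (a i) (b i)).indicator 1 τ :=
        intervalIntegral.integral_mono_on (iInf_le_iSup_of_finite x)
          (intervalIntegrable_filter_lt F x _ _)
          (by simpa only [sum_fn] using IntervalIntegrable.sum univ fun i _ => hint i)
          fun τ _ => h τ
    _ = ∑ i, c i * ∫ τ in (⨅ v, x v)..(⨆ v, x v), (Set.Ico (a i) (b i)).indicator 1 τ := by
        rw [intervalIntegral.integral_finsetSum fun i _ => hint i]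
        simp only [intervalIntegral.integral_const_mul]
    _ ≤ ∑ i, c i * (b i - a i) := sum_le_sum fun i _ =>
        mul_le_mul_of_nonneg_left (integral_indicator_one_Ico_le (hab i) (iInf_le_iSup_of_finite x))
          (hc i)

end Lovasz

lemma add_rpow_le_two_rpow_mul {x y p : ℝ} (hx : 0 ≤ x) (hy : 0 ≤ y) (hp : 1 ≤ p) :
    (x + y) ^ p ≤ 2 ^ (p - 1) * (x ^ p + y ^ p) := by
  simpa using Real.rpow_sum_le_const_mul_sum_rpow_of_nonneg univ (f := ![x, y]) hp
    (by simp [Fin.forall_fin_two, hx, hy])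

def stepVec {N k : ℕ} (S : Fin k → Finset (Fin N)) : (Fin k → ℝ) →ₗ[ℝ] Fin N → ℝ :=
  Fintype.linearCombination ℝ fun i => (S i : Set (Fin N)).indicator 1

section StepVec

variable {N k : ℕ} {S : Fin k → Finset (Fin N)} {v : Fin N} {i : Fin k}

lemma stepVec_apply_of_mem (hS : Pairwise (Disjoint on S)) (t : Fin k → ℝ) (hv : v ∈ S i) :
    stepVec S t v = t i := by
  rw [stepVec, Fintype.linearCombination_apply, Finset.sum_apply,
    sum_eq_single_of_mem i (mem_univ i)]
  · simp [hv]
  · intro j _ hji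
    simp [disjoint_left.1 (hS hji.symm) hv]

lemma stepVec_apply_of_forall_notMem (t : Fin k → ℝ) (hv : ∀ i, v ∉ S i) : stepVec S t v = 0 := by
  simp [stepVec, Fintype.linearCombination_apply, hv]

lemma stepVec_injective (hS : Pairwise (Disjoint on S)) (hne : ∀ i, (S i).Nonempty) :
    Injective (stepVec S) := fun t t' h => funext fun i => by
  obtain ⟨v, hv⟩ := hne i
  rw [← stepVec_apply_of_mem hS t hv, ← stepVec_apply_of_mem hS t' hv, h]

lemma mem_biUnion_iff_of_mem (hS : Pairwise (Disjoint on S)) {J : Finset (Fin k)}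
    (hv : v ∈ S i) : v ∈ J.biUnion S ↔ i ∈ J := by
  refine ⟨fun h => ?_, fun hi => mem_biUnion.2 ⟨i, hi, hv⟩⟩
  obtain ⟨j, hj, hvj⟩ := mem_biUnion.1 h
  by_contra hi
  exact disjoint_left.1 (hS fun hji : j = i => hi (hji ▸ hj)) hvj hv

lemma notMem_biUnion_of_forall_notMem {J : Finset (Fin k)} (hv : ∀ i, v ∉ S i) :
    v ∉ J.biUnion S := fun h => by
  obtain ⟨j, -, hj⟩ := mem_biUnion.1 h
  exact hv j hj

lemma filter_lt_stepVec_of_nonneg (hS : Pairwise (Disjoint on S)) (t : Fin k → ℝ) {τ : ℝ}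
    (hτ : 0 ≤ τ) : univ.filter (fun v => τ < stepVec S t v)
      = (univ.filter fun i => τ ∈ Set.Ico (min 0 (t i)) (max 0 (t i))).biUnion S := by
  ext v
  by_cases hv : ∃ i, v ∈ S i
  · obtain ⟨i, hi⟩ := hv
    rw [mem_biUnion_iff_of_mem hS hi]
    simp only [mem_filter, mem_univ, true_and, stepVec_apply_of_mem hS t hi, Set.mem_Ico]
    exact ⟨fun h => ⟨min_le_of_left_le hτ, lt_max_of_lt_right h⟩,
      fun h => (lt_max_iff.1 h.2).resolve_left hτ.not_gt⟩
  · simp only [not_exists] at hv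
    simp [stepVec_apply_of_forall_notMem t hv, notMem_biUnion_of_forall_notMem hv, hτ]

lemma compl_filter_lt_stepVec_of_neg (hS : Pairwise (Disjoint on S)) (t : Fin k → ℝ) {τ : ℝ}
    (hτ : τ < 0) : (univ.filter fun v => τ < stepVec S t v)ᶜ
      = (univ.filter fun i => τ ∈ Set.Ico (min 0 (t i)) (max 0 (t i))).biUnion S := by
  ext v
  by_cases hv : ∃ i, v ∈ S i
  · obtain ⟨i, hi⟩ := hv
    rw [mem_biUnion_iff_of_mem hS hi]
    simp only [mem_compl, mem_filter, mem_univ, true_and, stepVec_apply_of_mem hS t hi,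
      Set.mem_Ico, not_lt]
    exact ⟨fun h => ⟨min_le_of_right_le h, lt_max_of_lt_left hτ⟩,
      fun h => (min_le_iff.1 h.1).resolve_left hτ.not_ge⟩
  · simp only [not_exists] at hv
    simp [stepVec_apply_of_forall_notMem t hv, notMem_biUnion_of_forall_notMem hv, hτ]

end StepVec

namespace SubmodularHypergraph

variable {N : ℕ} (G : SubmodularHypergraph N) {e : Finset (Fin N)} {p C : ℝ} {k : ℕ}
  {S : Fin k → Finset (Fin N)}

lemma w_self (he : e ∈ G.E) : G.w e e = 0 := by
  simpa [G.w_empty e he] using (G.w_symm e he ∅ (empty_subset e)).symm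

lemma w_compl (he : e ∈ G.E) (S : Finset (Fin N)) : G.w e Sᶜ = G.w e S := by
  rw [G.w_inter e he Sᶜ, G.w_inter e he S, G.w_symm e he (S ∩ e) inter_subset_right]
  congr 1
  ext v
  simp only [mem_inter, mem_compl, mem_sdiff]
  tauto

lemma w_biUnion_le (he : e ∈ G.E) {ι : Type*} (J : Finset ι) (S : ι → Finset (Fin N)) :
    G.w e (J.biUnion S) ≤ ∑ i ∈ J, G.w e (S i) := by
  classical
  induction J using Finset.induction_on with
  | empty => simp [G.w_empty e he]
  | insert i J hi ih =>
    rw [biUnion_insert, sum_insert hi]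
    linarith [G.w_submodular e he (S i) (J.biUnion S), G.w_nonneg e he (S i ∩ J.biUnion S)]

lemma edge_nonempty (he : e ∈ G.E) : e.Nonempty := by
  obtain ⟨S, hSe, hS⟩ := G.w_normalized e he
  refine nonempty_iff_ne_empty.2 fun h => ?_
  rw [h, subset_empty] at hSe
  simp [hSe, G.w_empty e he] at hS

lemma fe_nonneg (he : e ∈ G.E) (x : Fin N → ℝ) : 0 ≤ G.fe e x :=
  lovasz_nonneg (G.w_nonneg e he) x

lemma Q_nonneg (x : Fin N → ℝ) : 0 ≤ G.Q p x :=
  sum_nonneg fun e he => mul_nonneg (G.θ_pos e he).le (Real.rpow_nonneg (G.fe_nonneg he x) p)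

lemma fe_le_of_mapsTo_Icc (he : e ∈ G.E) {x : Fin N → ℝ} {a b : ℝ} (hba : b ≤ a)
    (hx : ∀ v ∈ e, x v ∈ Set.Icc b a) : G.fe e x ≤ a - b := by
  have hlevel : ∀ τ, G.w e (univ.filter fun v => τ < x v) ≤ (Set.Ico b a).indicator 1 τ := by
    intro τ
    rw [G.w_inter e he]
    by_cases hτ : τ ∈ Set.Ico b a
    · simpa [hτ] using G.w_le_one e he _
    rcases lt_or_ge τ b with hτb | hτa
    · have : (univ.filter fun v => τ < x v) ∩ e = e :=
        inter_eq_right.2 fun v hv => by simpa using hτb.trans_le (hx v hv).1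
      simp [this, hτ, G.w_self he]
    · have : (univ.filter fun v => τ < x v) ∩ e = ∅ := by
        refine eq_empty_of_forall_notMem fun v hv => ?_
        simp only [mem_inter, mem_filter, mem_univ, true_and] at hv
        exact hv.1.not_ge <| (hx v hv.2).2.trans <| not_lt.1 fun h => hτ ⟨hτa, h⟩
      simp [this, hτ, G.w_empty e he]
  simpa [fe] using lovasz_le_sum_of_le_indicator (ι := Unit) (fun _ => zero_le_one)
    (fun _ => hba) fun τ => by simpa using hlevel τ

lemma w_filter_lt_stepVec_le (he : e ∈ G.E) (hS : Pairwise (Disjoint on S)) (t : Fin k → ℝ)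
    (τ : ℝ) : G.w e (univ.filter fun v => τ < stepVec S t v)
      ≤ ∑ i, G.w e (S i) * (Set.Ico (min 0 (t i)) (max 0 (t i))).indicator 1 τ := by
  have : G.w e (univ.filter fun v => τ < stepVec S t v)
      = G.w e ((univ.filter fun i => τ ∈ Set.Ico (min 0 (t i)) (max 0 (t i))).biUnion S) := by
    rcases le_or_gt 0 τ with hτ | hτ
    · rw [filter_lt_stepVec_of_nonneg hS t hτ]
    · rw [← G.w_compl he, compl_filter_lt_stepVec_of_neg hS t hτ]
  rw [this]
  refine (G.w_biUnion_le he _ S).trans_eq ?_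
  rw [sum_filter]
  refine sum_congr rfl fun i _ => ?_
  by_cases h : τ ∈ Set.Ico (min 0 (t i)) (max 0 (t i)) <;> simp [h]

lemma fe_stepVec_le (he : e ∈ G.E) (hS : Pairwise (Disjoint on S)) (t : Fin k → ℝ) :
    G.fe e (stepVec S t) ≤ ∑ i, G.w e (S i) * |t i| := by
  simpa only [fe, max_sub_min_eq_abs, sub_zero] using lovasz_le_sum_of_le_indicator
    (fun i => G.w_nonneg e he _) (fun i => min_le_max) (G.w_filter_lt_stepVec_le he hS t)

lemma vol_nonneg (S : Finset (Fin N)) : 0 ≤ G.vol S :=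
  sum_nonneg fun v _ => (G.μ_pos v).le

lemma vol_pos {S : Finset (Fin N)} (hS : S.Nonempty) : 0 < G.vol S :=
  sum_pos (fun v _ => G.μ_pos v) hS

lemma volB_nonneg (S : Finset (Fin N)) : 0 ≤ G.volB S :=
  sum_nonneg fun e he => mul_nonneg (G.θ_pos e he).le (G.w_nonneg e he S)

lemma volB_empty : G.volB ∅ = 0 :=
  sum_eq_zero fun e he => by rw [G.w_empty e he, mul_zero]

lemma volB_compl (S : Finset (Fin N)) : G.volB Sᶜ = G.volB S :=
  sum_congr rfl fun e he => by rw [G.w_compl he]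

lemma conductance_nonneg (S : Finset (Fin N)) : 0 ≤ G.conductance S :=
  div_nonneg (G.volB_nonneg S) (le_min (G.vol_nonneg S) (G.vol_nonneg Sᶜ))

/-- For `S = ∅` and `S = univ` the conductance is the junk value `0 / 0 = 0`, but then
`vol(∂S) = 0` as well. -/
lemma volB_le_conductance_mul_vol (S : Finset (Fin N)) :
    G.volB S ≤ G.conductance S * G.vol S := by
  by_cases hmin : 0 < min (G.vol S) (G.vol Sᶜ)
  · calc G.volB S = G.conductance S * min (G.vol S) (G.vol Sᶜ) :=
          (div_mul_cancel₀ _ hmin.ne').symm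
      _ ≤ G.conductance S * G.vol S :=
          mul_le_mul_of_nonneg_left (min_le_left _ _) (G.conductance_nonneg S)
  · have hS : G.volB S = 0 := by
      rcases S.eq_empty_or_nonempty with rfl | hS
      · exact G.volB_empty
      rcases Sᶜ.eq_empty_or_nonempty with hSc | hSc
      · rw [← G.volB_compl, hSc, G.volB_empty]
      · exact absurd (lt_min (G.vol_pos hS) (G.vol_pos hSc)) hmin
    rw [hS]
    exact mul_nonneg (G.conductance_nonneg S) (G.vol_nonneg S)

lemma normLpPow_smul (c : ℝ) (x : Fin N → ℝ) :
    G.normLpPow p (c • x) = |c| ^ p * G.normLpPow p x := by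
  simp only [normLpPow, mul_sum, Pi.smul_apply, smul_eq_mul, abs_mul,
    Real.mul_rpow (abs_nonneg c) (abs_nonneg _)]
  exact sum_congr rfl fun v _ => by ring

lemma normLpPow_neg (x : Fin N → ℝ) : G.normLpPow p (-x) = G.normLpPow p x := by
  simp [normLpPow]

lemma normLpPow_pos {x : Fin N → ℝ} (hx : x ≠ 0) : 0 < G.normLpPow p x := by
  obtain ⟨v, hv⟩ := Function.ne_iff.1 hx
  exact sum_pos' (fun v _ => mul_nonneg (G.μ_pos v).le (Real.rpow_nonneg (abs_nonneg _) _))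
    ⟨v, mem_univ v, mul_pos (G.μ_pos v) (Real.rpow_pos_of_pos (abs_pos.2 hv) _)⟩

lemma normLpPow_zero (hp : p ≠ 0) : G.normLpPow p 0 = 0 := by
  simp [normLpPow, Real.zero_rpow hp]

lemma continuous_normLpPow (hp : 0 ≤ p) : Continuous (G.normLpPow p) := by
  unfold normLpPow
  fun_prop (disch := exact fun _ => .inr hp)

lemma normLpPow_rpow_neg_inv_smul (hp : p ≠ 0) {x : Fin N → ℝ} (hx : x ≠ 0) :
    G.normLpPow p (G.normLpPow p x ^ (-p⁻¹) • x) = 1 := by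
  have hpos := G.normLpPow_pos (p := p) hx
  rw [normLpPow_smul, abs_of_pos (Real.rpow_pos_of_pos hpos _), ← Real.rpow_mul hpos.le,
    neg_mul, inv_mul_cancel₀ hp, Real.rpow_neg_one, inv_mul_cancel₀ hpos.ne']

lemma normLpPow_stepVec (hS : Pairwise (Disjoint on S)) (hp : p ≠ 0) (t : Fin k → ℝ) :
    G.normLpPow p (stepVec S t) = ∑ i, |t i| ^ p * G.vol (S i) := by
  classical
  rw [normLpPow, ← sum_add_sum_compl (univ.biUnion S), sum_biUnion fun i _ j _ hij => hS hij,
    sum_eq_zero (s := (univ.biUnion S)ᶜ), add_zero]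
  · exact sum_congr rfl fun i _ => by
      rw [vol, mul_sum]
      exact sum_congr rfl fun v hv => by rw [stepVec_apply_of_mem hS t hv, mul_comm]
  · intro v hv
    rw [stepVec_apply_of_forall_notMem t fun i hi =>
      (mem_compl.1 hv) (mem_biUnion.2 ⟨i, mem_univ i, hi⟩), abs_zero, Real.zero_rpow hp, mul_zero]

lemma card_filter_inter_nonempty_le (he : e ∈ G.E) (hS : Pairwise (Disjoint on S)) :
    #(univ.filter fun i => (S i ∩ e).Nonempty) ≤ min (G.E.sup card) k := by
  classical
  refine le_min ?_ ((card_le_univ _).trans (Fintype.card_fin k).le)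
  calc #(univ.filter fun i => (S i ∩ e).Nonempty)
      ≤ #((univ.filter fun i => (S i ∩ e).Nonempty).biUnion fun i => S i ∩ e) :=
        card_le_card_biUnion (fun i _ j _ hij => (hS hij).mono inter_subset_left
          inter_subset_left) fun i hi => (mem_filter.1 hi).2
    _ ≤ #e := card_le_card (biUnion_subset.2 fun _ _ => inter_subset_right)
    _ ≤ G.E.sup card := le_sup (f := card) he

lemma fe_stepVec_rpow_le (he : e ∈ G.E) (hS : Pairwise (Disjoint on S)) (hp : 1 ≤ p)
    (t : Fin k → ℝ) : G.fe e (stepVec S t) ^ p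
      ≤ ((min (G.E.sup card) k : ℕ) : ℝ) ^ (p - 1) * ∑ i, |t i| ^ p * G.w e (S i) := by
  set J := univ.filter fun i => (S i ∩ e).Nonempty
  have hw : ∀ i, 0 ≤ G.w e (S i) := fun i => G.w_nonneg e he _
  have hJ : ∑ i ∈ J, G.w e (S i) * |t i| = ∑ i, G.w e (S i) * |t i| := by
    refine sum_subset (subset_univ J) fun i _ hi => ?_
    have : S i ∩ e = ∅ := not_nonempty_iff_eq_empty.1 fun h => hi (by simpa [J] using h)
    rw [G.w_inter e he, this, G.w_empty e he, zero_mul]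
  calc G.fe e (stepVec S t) ^ p ≤ (∑ i ∈ J, G.w e (S i) * |t i|) ^ p :=
        Real.rpow_le_rpow (G.fe_nonneg he _) (hJ ▸ G.fe_stepVec_le he hS t) (by linarith)
    _ ≤ (#J : ℝ) ^ (p - 1) * ∑ i ∈ J, (G.w e (S i) * |t i|) ^ p :=
        Real.rpow_sum_le_const_mul_sum_rpow_of_nonneg J hp fun i _ =>
          mul_nonneg (hw i) (abs_nonneg _)
    _ ≤ ((min (G.E.sup card) k : ℕ) : ℝ) ^ (p - 1) * ∑ i, |t i| ^ p * G.w e (S i) := by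
        refine mul_le_mul (Real.rpow_le_rpow (Nat.cast_nonneg _)
          (by exact_mod_cast G.card_filter_inter_nonempty_le he hS) (by linarith)) ?_
          (sum_nonneg fun i _ => Real.rpow_nonneg (mul_nonneg (hw i) (abs_nonneg _)) _)
          (Real.rpow_nonneg (Nat.cast_nonneg _) _)
        calc ∑ i ∈ J, (G.w e (S i) * |t i|) ^ p ≤ ∑ i ∈ J, |t i| ^ p * G.w e (S i) :=
              sum_le_sum fun i _ => by
                rw [Real.mul_rpow (hw i) (abs_nonneg _), mul_comm]
                exact mul_le_mul_of_nonneg_left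
                  (Real.rpow_le_self_of_le_one (hw i) (G.w_le_one e he _) hp)
                  (Real.rpow_nonneg (abs_nonneg _) _)
          _ ≤ ∑ i, |t i| ^ p * G.w e (S i) :=
              sum_le_sum_of_subset_of_nonneg (subset_univ J) fun i _ _ =>
                mul_nonneg (Real.rpow_nonneg (abs_nonneg _) _) (hw i)

lemma rpow_abs_le_sum_of_homogeneous (hG : G.Homogeneous) (he : e ∈ G.E)
    (hS : Pairwise (Disjoint on S)) (hp : 0 < p) (t : Fin k → ℝ) {u u' : Fin N} (hu : u ∈ e)
    (hu' : u' ∈ e) (hne : stepVec S t u ≠ stepVec S t u') :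
    |stepVec S t u| ^ p
      ≤ ∑ i ∈ univ.filter (fun i => t i = stepVec S t u), |t i| ^ p * G.w e (S i) := by
  have hterm : ∀ i, 0 ≤ |t i| ^ p * G.w e (S i) := fun i =>
    mul_nonneg (Real.rpow_nonneg (abs_nonneg _) _) (G.w_nonneg e he _)
  by_cases hblock : ∃ i, u ∈ S i
  · obtain ⟨i, hi⟩ := hblock
    have hu'i : u' ∉ S i := fun h =>
      hne (by rw [stepVec_apply_of_mem hS t hi, stepVec_apply_of_mem hS t h])
    have hw : G.w e (S i) = 1 := by
      rw [G.w_inter e he]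
      refine hG e he _ inter_subset_right (nonempty_iff_ne_empty.1 ⟨u, mem_inter.2 ⟨hi, hu⟩⟩)
        fun h => hu'i (mem_inter.1 (h ▸ hu')).1
    calc |stepVec S t u| ^ p = |t i| ^ p * G.w e (S i) := by
          rw [hw, mul_one, stepVec_apply_of_mem hS t hi]
      _ ≤ _ := single_le_sum (fun j _ => hterm j)
          (mem_filter.2 ⟨mem_univ i, (stepVec_apply_of_mem hS t hi).symm⟩)
  · rw [stepVec_apply_of_forall_notMem t (not_exists.1 hblock), abs_zero, Real.zero_rpow hp.ne']
    exact sum_nonneg fun i _ => hterm i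

lemma fe_stepVec_rpow_le_of_homogeneous (hG : G.Homogeneous) (he : e ∈ G.E)
    (hS : Pairwise (Disjoint on S)) (hp : 1 ≤ p) (t : Fin k → ℝ) :
    G.fe e (stepVec S t) ^ p ≤ 2 ^ (p - 1) * ∑ i, |t i| ^ p * G.w e (S i) := by
  set x := stepVec S t
  have hterm : ∀ i, 0 ≤ |t i| ^ p * G.w e (S i) := fun i =>
    mul_nonneg (Real.rpow_nonneg (abs_nonneg _) _) (G.w_nonneg e he _)
  obtain ⟨u, hu, hxu⟩ := exists_mem_eq_sup' (G.edge_nonempty he) x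
  obtain ⟨u', hu', hxu'⟩ := exists_mem_eq_inf' (G.edge_nonempty he) x
  have hfe : G.fe e x ≤ x u - x u' := by
    rw [← hxu, ← hxu']
    exact G.fe_le_of_mapsTo_Icc he ((inf'_le x hu).trans (le_sup' x hu))
      fun v hv => ⟨inf'_le x hv, le_sup' x hv⟩
  rcases eq_or_ne (x u) (x u') with heq | hne
  · have : G.fe e x = 0 := le_antisymm (by linarith) (G.fe_nonneg he x)
    rw [this, Real.zero_rpow (by linarith)]
    exact mul_nonneg (Real.rpow_nonneg zero_le_two _) (sum_nonneg fun i _ => hterm i)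
  have hsplit : ∑ i ∈ univ.filter (fun i => t i = x u'), |t i| ^ p * G.w e (S i)
      ≤ ∑ i ∈ univ.filter (fun i => ¬ t i = x u), |t i| ^ p * G.w e (S i) :=
    sum_le_sum_of_subset_of_nonneg
      (fun i hi => mem_filter.2 ⟨mem_univ i, fun h => hne (h.symm.trans (mem_filter.1 hi).2)⟩)
      fun i _ _ => hterm i
  calc G.fe e x ^ p ≤ (|x u| + |x u'|) ^ p :=
        Real.rpow_le_rpow (G.fe_nonneg he x)
          (hfe.trans (by linarith [le_abs_self (x u), neg_abs_le (x u')])) (by linarith)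
    _ ≤ 2 ^ (p - 1) * (|x u| ^ p + |x u'| ^ p) :=
        add_rpow_le_two_rpow_mul (abs_nonneg _) (abs_nonneg _) hp
    _ ≤ 2 ^ (p - 1) * ∑ i, |t i| ^ p * G.w e (S i) := by
        refine mul_le_mul_of_nonneg_left ?_ (Real.rpow_nonneg zero_le_two _)
        rw [← sum_filter_add_sum_filter_not univ fun i => t i = x u]
        exact add_le_add
          (G.rpow_abs_le_sum_of_homogeneous hG he hS (by linarith) t hu hu' hne)
          ((G.rpow_abs_le_sum_of_homogeneous hG he hS (by linarith) t hu' hu hne.symm).trans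
            hsplit)

def admissibleSets (p : ℝ) (k : ℕ) : Set (Set (Fin N → ℝ)) :=
  {A | IsClosed A ∧ (∀ x ∈ A, -x ∈ A) ∧ A ⊆ {x | G.normLpPow p x = 1} ∧ (k : ℕ∞) ≤ genus A}

lemma varEigen_le_sSup {A : Set (Fin N → ℝ)} (hA : A ∈ G.admissibleSets p k) :
    G.varEigen p k ≤ sSup (G.Q p '' A) :=
  csInf_le ⟨0, by
    rintro _ ⟨B, -, rfl⟩
    exact Real.sSup_nonneg (by rintro _ ⟨x, -, rfl⟩; exact G.Q_nonneg x)⟩ ⟨A, hA, rfl⟩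

lemma varEigen_eq_zero_of_admissibleSets_eq_empty (h : G.admissibleSets p k = ∅) :
    G.varEigen p k = 0 := by
  rw [varEigen, ← admissibleSets, h, Set.image_empty, Real.sInf_empty]

def stepSphere (p : ℝ) (S : Fin k → Finset (Fin N)) : Set (Fin N → ℝ) :=
  (LinearMap.range (stepVec S) : Set (Fin N → ℝ)) ∩ {x | G.normLpPow p x = 1}

lemma stepSphere_mem_admissibleSets (hS : Pairwise (Disjoint on S)) (hne : ∀ i, (S i).Nonempty)
    (hp : 0 < p) (hk : (G.admissibleSets p k).Nonempty) :
    G.stepSphere p S ∈ G.admissibleSets p k := by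
  refine ⟨(Submodule.closed_of_finiteDimensional _).inter
    (isClosed_eq (G.continuous_normLpPow hp.le) continuous_const), ?_, Set.inter_subset_right, ?_⟩
  · rintro x ⟨hx, hx1⟩
    exact ⟨neg_mem hx, (G.normLpPow_neg x).trans hx1⟩
  · obtain ⟨A, hAc, hAs, hA1, hAk⟩ := hk
    have hA0 : ∀ x ∈ A, x ≠ 0 := fun x hx h0 => by
      simpa [h0, G.normLpPow_zero hp.ne'] using hA1 hx
    obtain ⟨Z, hZA, ⟨φ, hφ, hφodd, hφ0⟩, hZk⟩ := exists_subset_genusLE_le_genus hAc hAs hA0 hAk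
    have hψ0 : ∀ z ∈ Z, stepVec S (φ z) ≠ 0 := fun z hz h =>
      hφ0 z hz (stepVec_injective hS hne (h.trans (map_zero _).symm))
    refine hZk.trans (genus_le_of_odd_map (f := fun z =>
      G.normLpPow p (stepVec S (φ z)) ^ (-p⁻¹) • stepVec S (φ z)) ?_ ?_ ?_)
    · have hψ : ContinuousOn (fun z => stepVec S (φ z)) Z :=
        (LinearMap.continuous_of_finiteDimensional _).comp_continuousOn hφ
      exact (((G.continuous_normLpPow hp.le).comp_continuousOn hψ).rpow_const
        fun z hz => .inl (G.normLpPow_pos (hψ0 z hz)).ne').smul hψ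
    · intro z hz
      refine ⟨⟨_ • φ z, by rw [map_smul]⟩, G.normLpPow_rpow_neg_inv_smul hp.ne' (hψ0 z hz)⟩
    · intro z hz
      simp only [hφodd z hz, map_neg, smul_neg, normLpPow_neg]

lemma Q_stepVec_le (hedge : ∀ e ∈ G.E, ∀ t : Fin k → ℝ,
      G.fe e (stepVec S t) ^ p ≤ C * ∑ i, |t i| ^ p * G.w e (S i)) (t : Fin k → ℝ) :
    G.Q p (stepVec S t) ≤ C * ∑ i, |t i| ^ p * G.volB (S i) := by
  calc G.Q p (stepVec S t) ≤ ∑ e ∈ G.E, G.θ e * (C * ∑ i, |t i| ^ p * G.w e (S i)) :=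
        sum_le_sum fun e he => mul_le_mul_of_nonneg_left (hedge e he t) (G.θ_pos e he).le
    _ = C * ∑ i, |t i| ^ p * G.volB (S i) := by
        simp only [volB, mul_sum, sum_comm (s := G.E)]
        exact sum_congr rfl fun i _ => sum_congr rfl fun e _ => by ring

lemma sSup_Q_stepSphere_le (hS : Pairwise (Disjoint on S)) (hp : 0 < p) (hC : 0 ≤ C)
    (hedge : ∀ e ∈ G.E, ∀ t : Fin k → ℝ,
      G.fe e (stepVec S t) ^ p ≤ C * ∑ i, |t i| ^ p * G.w e (S i)) :
    sSup (G.Q p '' G.stepSphere p S) ≤ C * ⨆ i, G.conductance (S i) := by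
  set h := ⨆ i, G.conductance (S i)
  have hh : 0 ≤ h := Real.iSup_nonneg fun i => G.conductance_nonneg _
  refine Real.sSup_le ?_ (mul_nonneg hC hh)
  rintro _ ⟨_, ⟨⟨t, rfl⟩, ht⟩, rfl⟩
  rw [Set.mem_ofPred_eq, G.normLpPow_stepVec hS hp.ne'] at ht
  calc G.Q p (stepVec S t) ≤ C * ∑ i, |t i| ^ p * G.volB (S i) := G.Q_stepVec_le hedge t
    _ ≤ C * ∑ i, |t i| ^ p * (h * G.vol (S i)) := by
        gcongr with i
        exact (G.volB_le_conductance_mul_vol _).trans (mul_le_mul_of_nonneg_right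
          (le_ciSup (f := fun i => G.conductance (S i)) (Set.finite_range _).bddAbove i)
          (G.vol_nonneg _))
    _ = C * h := by
        rw [← mul_one (C * h), ← ht, mul_sum, mul_sum]
        exact sum_congr rfl fun i _ => by ring

lemma varEigen_le_mul_iSup_conductance (hS : Pairwise (Disjoint on S))
    (hne : ∀ i, (S i).Nonempty) (hp : 0 < p) (hC : 0 ≤ C)
    (hedge : ∀ e ∈ G.E, ∀ t : Fin k → ℝ,
      G.fe e (stepVec S t) ^ p ≤ C * ∑ i, |t i| ^ p * G.w e (S i)) :
    G.varEigen p k ≤ C * ⨆ i, G.conductance (S i) := by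
  rcases (G.admissibleSets p k).eq_empty_or_nonempty with h | h
  · rw [G.varEigen_eq_zero_of_admissibleSets_eq_empty h]
    exact mul_nonneg hC (Real.iSup_nonneg fun i => G.conductance_nonneg _)
  · exact (G.varEigen_le_sSup (G.stepSphere_mem_admissibleSets hS hne hp h)).trans
      (G.sSup_Q_stepSphere_le hS hp hC hedge)

lemma varEigen_le_mul_cheegerConst (hkN : k ≤ N) (hp : 0 < p) (hC : 0 ≤ C)
    (hedge : ∀ S : Fin k → Finset (Fin N), Pairwise (Disjoint on S) → ∀ e ∈ G.E,
      ∀ t : Fin k → ℝ, G.fe e (stepVec S t) ^ p ≤ C * ∑ i, |t i| ^ p * G.w e (S i)) :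
    G.varEigen p k ≤ C * G.cheegerConst k := by
  rw [cheegerConst, ← smul_eq_mul, ← Real.sInf_smul_of_nonneg hC]
  refine le_csInf (Set.Nonempty.smul_set ⟨_, fun i => {Fin.castLE hkN i},
    fun i => singleton_nonempty _, fun i j hij => disjoint_singleton.2 fun h =>
      hij (Fin.castLE_injective hkN h), rfl⟩) ?_
  rintro _ ⟨_, ⟨S, hne, hS, rfl⟩, rfl⟩
  exact G.varEigen_le_mul_iSup_conductance (fun i j => hS i j) hne hp hC
    (hedge S fun i j => hS i j)

end SubmodularHypergraph

theorem stmt9_general {N : ℕ} (G : SubmodularHypergraph N) (p : ℝ) (hp : 1 ≤ p)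
    (k : ℕ) (hkN : k ≤ N) :
    G.varEigen p k
      ≤ ((min (G.E.sup Finset.card) k : ℕ) : ℝ) ^ (p - 1) * G.cheegerConst k ∧
    (G.Homogeneous → G.varEigen p k ≤ (2 : ℝ) ^ (p - 1) * G.cheegerConst k) :=
  ⟨G.varEigen_le_mul_cheegerConst hkN (by linarith) (by positivity)
      fun _ hS _ he t => G.fe_stepVec_rpow_le he hS hp t,
    fun hG => G.varEigen_le_mul_cheegerConst hkN (by linarith) (by positivity)
      fun _ hS _ he t => G.fe_stepVec_rpow_le_of_homogeneous hG he hS hp t⟩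

/-- Cheeger upper bounds. For `p ≥ 1` and `1 ≤ k ≤ N`,
`λ_k^{(p)} ≤ (min{ζ(E), k})^{p−1} h_k`; for homogeneous hypergraphs the tighter bound
`λ_k^{(p)} ≤ 2^{p−1} h_k` holds. -/
theorem stmt9 {N : ℕ} (G : SubmodularHypergraph N) (p : ℝ) (hp : 1 ≤ p)
    (k : ℕ) (hk1 : 1 ≤ k) (hkN : k ≤ N) :
    G.varEigen p k
      ≤ ((min (G.E.sup Finset.card) k : ℕ) : ℝ) ^ (p - 1) * G.cheegerConst k ∧
    (G.Homogeneous → G.varEigen p k ≤ (2 : ℝ) ^ (p - 1) * G.cheegerConst k) :=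
  stmt9_general G p hp k hkN
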